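/- Let F be a continuous real-valued function on [a,b] with maximum value M, let D = {x ∈ [a,b] : F(x) = M}, and let C = [c1,c2] be the smallest closed interval containing D. Then the least concave majorant F̂ satisfies F̂ ≡ M on C, F̂ is strictly increasing on (a,c1), and F̂ is strictly decreasing on (c2,b). -/

import Mathlib

/-!
The least concave majorant `F̂` is itself a concave majorant, and `F̂ ≤ M` because the constant
`M` is one. On `[c₁, c₂]` every concave majorant `G` satisfies `G ≥ min (G c₁) (G c₂) ≥ M`, so
`F̂ = M` there. For `x < x₀ < c₁`, compactness gives `max F < M` on `[a, x₀]`, so a tent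
`min M (M + k (z - x₀))` with a steep enough slope `k` is a concave majorant, and `F̂ x < M = F̂ c₁`;
a concave function that is smaller at `x` than at a later point is strictly increasing up to `x`.
The statement right of `c₂` is the reflection `x ↦ -x` of the one left of `c₁`.
-/

open Set

/-- The least concave majorant of `F` on `[a, b]`. -/
noncomputable def leastConcaveMajorant (a b : ℝ) (F : ℝ → ℝ) (x : ℝ) : ℝ :=
  sInf {y : ℝ | ∃ G : ℝ → ℝ, ConcaveOn ℝ (Set.Icc a b) G ∧
    (∀ z ∈ Set.Icc a b, F z ≤ G z) ∧ y = G x}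

section LeastConcaveMajorant

variable {a b M x : ℝ} {F : ℝ → ℝ}

theorem leastConcaveMajorant_le {G : ℝ → ℝ} (hG : ConcaveOn ℝ (Icc a b) G)
    (hFG : ∀ z ∈ Icc a b, F z ≤ G z) (hx : x ∈ Icc a b) :
    leastConcaveMajorant a b F x ≤ G x :=
  csInf_le ⟨F x, by rintro _ ⟨G', -, hFG', rfl⟩; exact hFG' x hx⟩ ⟨G, hG, hFG, rfl⟩

theorem le_leastConcaveMajorant {y : ℝ} (hM : ∀ z ∈ Icc a b, F z ≤ M)
    (h : ∀ G : ℝ → ℝ, ConcaveOn ℝ (Icc a b) G → (∀ z ∈ Icc a b, F z ≤ G z) → y ≤ G x) :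
    y ≤ leastConcaveMajorant a b F x :=
  le_csInf ⟨M, fun _ => M, concaveOn_const M (convex_Icc a b), hM, rfl⟩
    (by rintro _ ⟨G, hG, hFG, rfl⟩; exact h G hG hFG)

theorem leastConcaveMajorant_le_of_le (hM : ∀ z ∈ Icc a b, F z ≤ M) (hx : x ∈ Icc a b) :
    leastConcaveMajorant a b F x ≤ M :=
  leastConcaveMajorant_le (G := fun _ => M) (concaveOn_const M (convex_Icc a b)) hM hx

theorem concaveOn_leastConcaveMajorant (hM : ∀ z ∈ Icc a b, F z ≤ M) :
    ConcaveOn ℝ (Icc a b) (leastConcaveMajorant a b F) := by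
  refine ⟨convex_Icc a b, fun p hp q hq s t hs ht hst => le_leastConcaveMajorant hM ?_⟩
  intro G hG hFG
  calc s • leastConcaveMajorant a b F p + t • leastConcaveMajorant a b F q
      ≤ s • G p + t • G q := by
        gcongr
        exacts [leastConcaveMajorant_le hG hFG hp, leastConcaveMajorant_le hG hFG hq]
    _ ≤ G (s • p + t • q) := hG.2 hp hq hs ht hst

theorem leastConcaveMajorant_eq_of_mem_Icc {c₁ c₂ : ℝ} (hM : ∀ z ∈ Icc a b, F z ≤ M)
    (hc₁ : c₁ ∈ Icc a b) (hc₂ : c₂ ∈ Icc a b) (hFc₁ : F c₁ = M) (hFc₂ : F c₂ = M)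
    (hx : x ∈ Icc c₁ c₂) : leastConcaveMajorant a b F x = M := by
  refine le_antisymm (leastConcaveMajorant_le_of_le hM ⟨hc₁.1.trans hx.1, hx.2.trans hc₂.2⟩) ?_
  refine le_leastConcaveMajorant hM fun G hG hFG => ?_
  calc M ≤ min (G c₁) (G c₂) := le_min (hFc₁ ▸ hFG c₁ hc₁) (hFc₂ ▸ hFG c₂ hc₂)
    _ ≤ G x := hG.ge_on_segment hc₁ hc₂ (by rwa [segment_eq_Icc (hx.1.trans hx.2)])

theorem concaveOn_min_affine (M k x₀ : ℝ) :
    ConcaveOn ℝ univ (fun z => min M (M + k * (z - x₀))) :=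
  ((concaveOn_const M convex_univ).inf
    (((LinearMap.mul ℝ ℝ k).concaveOn convex_univ).add_const (M - k * x₀))).congr
    fun z _ => by simp only [Pi.inf_apply, Pi.add_apply, LinearMap.mul_apply']; ring_nf

theorem leastConcaveMajorant_lt_of_forall_lt_Ico {c : ℝ} (hF : ContinuousOn F (Icc a b))
    (hM : ∀ z ∈ Icc a b, F z ≤ M) (hcb : c ≤ b) (hlt : ∀ z ∈ Ico a c, F z < M)
    (hx : x ∈ Ico a c) : leastConcaveMajorant a b F x < M := by
  obtain ⟨x₀, hxx₀, hx₀c⟩ := exists_between hx.2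
  obtain ⟨z₀, hz₀, hmax⟩ := isCompact_Icc.exists_isMaxOn (nonempty_Icc.2 (hx.1.trans hxx₀.le))
    (hF.mono (Icc_subset_Icc_right (hx₀c.le.trans hcb)))
  have hFz₀ : F z₀ < M := hlt z₀ ⟨hz₀.1, hz₀.2.trans_lt hx₀c⟩
  set k := (M - F z₀) / (x₀ - a)
  have hk : 0 < k := div_pos (by linarith) (by linarith [hx.1])
  have hka : k * (x₀ - a) = M - F z₀ := div_mul_cancel₀ _ (by linarith [hx.1])
  have hmaj : ∀ z ∈ Icc a b, F z ≤ min M (M + k * (z - x₀)) := by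
    intro z hz
    refine le_min (hM z hz) ?_
    rcases le_or_gt z x₀ with hzx₀ | hx₀z
    · have : F z ≤ F z₀ := hmax ⟨hz.1, hzx₀⟩
      nlinarith [hz.1]
    · nlinarith [hM z hz]
  calc leastConcaveMajorant a b F x
      ≤ min M (M + k * (x - x₀)) :=
        leastConcaveMajorant_le ((concaveOn_min_affine M k x₀).subset (subset_univ _)
          (convex_Icc a b)) hmaj ⟨hx.1, (hx.2.trans_le hcb).le⟩
    _ ≤ M + k * (x - x₀) := min_le_right _ _
    _ < M := by nlinarith

theorem ConcaveOn.comp_neg_Icc {G : ℝ → ℝ} (hG : ConcaveOn ℝ (Icc a b) G) :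
    ConcaveOn ℝ (Icc (-b) (-a)) (fun z => G (-z)) := by
  have h : (-id : ℝ → ℝ) ⁻¹' Icc a b = Icc (-b) (-a) := by
    ext z; simp [neg_le, le_neg, and_comm]
  simpa [Function.comp_def, h] using hG.comp_affineMap (-AffineMap.id ℝ ℝ)

theorem leastConcaveMajorant_comp_neg (a b : ℝ) (F : ℝ → ℝ) (x : ℝ) :
    leastConcaveMajorant (-b) (-a) (fun z => F (-z)) (-x) = leastConcaveMajorant a b F x := by
  unfold leastConcaveMajorant
  congr 1
  ext y
  constructor
  · rintro ⟨G, hG, hFG, rfl⟩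
    refine ⟨fun z => G (-z), by simpa using hG.comp_neg_Icc, fun z hz => ?_, rfl⟩
    simpa using hFG (-z) (neg_mem_Icc_iff.2 (by rwa [neg_neg, neg_neg]))
  · rintro ⟨G, hG, hFG, rfl⟩
    refine ⟨fun z => G (-z), hG.comp_neg_Icc, fun z hz => ?_, by simp⟩
    exact hFG (-z) (neg_mem_Icc_iff.2 hz)

theorem strictMonoOn_leastConcaveMajorant {c : ℝ} (hF : ContinuousOn F (Icc a b))
    (hM : ∀ z ∈ Icc a b, F z ≤ M) (hc : c ∈ Icc a b) (hFc : F c = M)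
    (hlt : ∀ z ∈ Ico a c, F z < M) : StrictMonoOn (leastConcaveMajorant a b F) (Icc a c) := by
  have hc_eq : leastConcaveMajorant a b F c = M :=
    leastConcaveMajorant_eq_of_mem_Icc hM hc hc hFc hFc (left_mem_Icc.2 le_rfl)
  have hlt_M : ∀ z ∈ Ico a c, leastConcaveMajorant a b F z < M :=
    fun z hz => leastConcaveMajorant_lt_of_forall_lt_Ico hF hM hc.2 hlt hz
  intro u hu v hv huv
  rcases hv.2.eq_or_lt with rfl | hvc
  · exact hc_eq ▸ hlt_M u ⟨hu.1, huv⟩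
  exact (concaveOn_leastConcaveMajorant hM).strictMonoOn hc hvc (hc_eq ▸ hlt_M v ⟨hv.1, hvc⟩)
    ⟨⟨hu.1, (huv.trans hvc).le.trans hc.2⟩, huv.le⟩
    ⟨⟨hv.1, hvc.le.trans hc.2⟩, mem_Iic.2 le_rfl⟩ huv

theorem strictAntiOn_leastConcaveMajorant {c : ℝ} (hF : ContinuousOn F (Icc a b))
    (hM : ∀ z ∈ Icc a b, F z ≤ M) (hc : c ∈ Icc a b) (hFc : F c = M)
    (hlt : ∀ z ∈ Ioc c b, F z < M) : StrictAntiOn (leastConcaveMajorant a b F) (Icc c b) := by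
  have neg_mem : ∀ {z p q : ℝ}, z ∈ Icc p q → -z ∈ Icc (-q) (-p) :=
    fun hz => ⟨neg_le_neg hz.2, neg_le_neg hz.1⟩
  have hmono : StrictMonoOn (leastConcaveMajorant (-b) (-a) (fun z => F (-z))) (Icc (-b) (-c)) :=
    strictMonoOn_leastConcaveMajorant
      (hF.comp continuous_neg.continuousOn fun _ hz => neg_mem_Icc_iff.2 hz)
      (fun z hz => hM (-z) (neg_mem_Icc_iff.2 hz)) (neg_mem hc) (by simpa using hFc)
      (fun z hz => hlt (-z) ⟨lt_neg.1 hz.2, neg_le.1 hz.1⟩)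
  intro u hu v hv huv
  simpa [leastConcaveMajorant_comp_neg] using hmono (neg_mem hv) (neg_mem hu) (neg_lt_neg huv)

end LeastConcaveMajorant

theorem stmt5_general (a b : ℝ) (F : ℝ → ℝ)
    (hF : ContinuousOn F (Set.Icc a b))
    (M : ℝ) (hM : ∀ x ∈ Set.Icc a b, F x ≤ M)
    (D : Set ℝ) (hD : D = {x ∈ Set.Icc a b | F x = M}) (hDne : D.Nonempty)
    (c1 c2 : ℝ) (hc1 : c1 = sInf D) (hc2 : c2 = sSup D) :
    (∀ x ∈ Set.Icc c1 c2, leastConcaveMajorant a b F x = M) ∧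
    StrictMonoOn (leastConcaveMajorant a b F) (Set.Ioo a c1) ∧
    StrictAntiOn (leastConcaveMajorant a b F) (Set.Ioo c2 b) := by
  have hmemD : ∀ {z}, z ∈ D ↔ z ∈ Icc a b ∧ F z = M := by simp [hD]
  have hDclosed : IsClosed D :=
    hD ▸ hF.preimage_isClosed_of_isClosed isClosed_Icc isClosed_singleton
  have hDbdd_below : BddBelow D := bddBelow_Icc.mono fun _ hz => (hmemD.1 hz).1
  have hDbdd_above : BddAbove D := bddAbove_Icc.mono fun _ hz => (hmemD.1 hz).1
  obtain ⟨hc1ab, hFc1⟩ := hmemD.1 (hc1 ▸ hDclosed.csInf_mem hDne hDbdd_below)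
  obtain ⟨hc2ab, hFc2⟩ := hmemD.1 (hc2 ▸ hDclosed.csSup_mem hDne hDbdd_above)
  have hlt_left : ∀ z ∈ Ico a c1, F z < M := fun z hz => by
    have hz_ab : z ∈ Icc a b := ⟨hz.1, hz.2.le.trans hc1ab.2⟩
    exact (hM z hz_ab).lt_of_ne fun hFz =>
      notMem_of_lt_csInf (hc1 ▸ hz.2) hDbdd_below (hmemD.2 ⟨hz_ab, hFz⟩)
  have hlt_right : ∀ z ∈ Ioc c2 b, F z < M := fun z hz => by
    have hz_ab : z ∈ Icc a b := ⟨hc2ab.1.trans hz.1.le, hz.2⟩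
    exact (hM z hz_ab).lt_of_ne fun hFz =>
      notMem_of_csSup_lt (hc2 ▸ hz.1) hDbdd_above (hmemD.2 ⟨hz_ab, hFz⟩)
  exact ⟨fun x hx => leastConcaveMajorant_eq_of_mem_Icc hM hc1ab hc2ab hFc1 hFc2 hx,
    (strictMonoOn_leastConcaveMajorant hF hM hc1ab hFc1 hlt_left).mono Ioo_subset_Icc_self,
    (strictAntiOn_leastConcaveMajorant hF hM hc2ab hFc2 hlt_right).mono Ioo_subset_Icc_self⟩

theorem stmt5 (a b : ℝ) (hab : a < b) (F : ℝ → ℝ)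
    (hF : ContinuousOn F (Set.Icc a b))
    (M : ℝ) (hM : ∀ x ∈ Set.Icc a b, F x ≤ M)
    (D : Set ℝ) (hD : D = {x ∈ Set.Icc a b | F x = M}) (hDne : D.Nonempty)
    (c1 c2 : ℝ) (hc1 : c1 = sInf D) (hc2 : c2 = sSup D) :
    (∀ x ∈ Set.Icc c1 c2, leastConcaveMajorant a b F x = M) ∧
    StrictMonoOn (leastConcaveMajorant a b F) (Set.Ioo a c1) ∧
    StrictAntiOn (leastConcaveMajorant a b F) (Set.Ioo c2 b) :=
  stmt5_general a b F hF M hM D hD hDne c1 c2 hc1 hc2
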